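/- arXiv:0904.0328 — 2 statements merged into one kernel-verified Lean document; each statement's English description precedes it below -/
import Mathlib

section
/- Define b : ℕ → ℤ by b m = ((B^(m−3)).mulVec ![0,0,0,1]) 2 for m ≥ 3 and b m = 0 for m < 3. Then for every m ≥ 1, 21·(∑_{k=0}^{⌊m/2⌋} b (m − 2k)) = 2^m + w(m), where w(m) = −22, −2, −4, −8, −16, 10 according as m ≡ 0, 1, 2, 3, 4, 5 (mod 6). -/
def B : Matrix (Fin 4) (Fin 4) ℤ :=
  !![0, 0, 0, 1; 0, 1, 1, 0; 2, 1, 0, 0; 0, 0, 1, 1]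

def b (m : ℕ) : ℤ :=
  if 3 ≤ m then ((B ^ (m - 3)).mulVec ![0, 0, 0, 1]) 2 else 0

/-!
`(1, 2, 2, 2)` is an eigenvector of `B` for the eigenvalue 2, and `e₃ = (0, 0, 0, 1)` splits as
`7 e₃ = (1, 2, 2, 2) + ρ₀` where `B` permutes `ρ₀ ↦ ρ₁ ↦ ρ₂ ↦ ρ₀` cyclically. Hence
`7 B^n e₃ = 2^n (1, 2, 2, 2) + ρ_{n mod 3}`, so `7 b (n + 3) = 2^(n+1) + (−2, −4, 6)_{n mod 3}`.
Since the sum `S m = ∑_k b (m − 2k)` satisfies `S (m + 2) = b (m + 2) + S m`, the claim follows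
by induction in steps of two, the periodic parts matching modulo 6.
-/

open Matrix

theorem Matrix.smul_pow_mulVec_eq_of_mulVec_eq {R n : Type*} [CommSemiring R] [Fintype n]
    [DecidableEq n] (A : Matrix n n R) {x u : n → R} {c μ : R} {r : ℕ → n → R}
    (hu : A *ᵥ u = μ • u) (hr : ∀ k, A *ᵥ r k = r (k + 1)) (hx : c • x = u + r 0) (k : ℕ) :
    c • (A ^ k *ᵥ x) = μ ^ k • u + r k := by
  induction k with
  | zero => simpa using hx
  | succ k ih =>
    rw [pow_succ', ← mulVec_mulVec, ← mulVec_smul, ih, mulVec_add, mulVec_smul, hu, hr,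
      smul_smul, pow_succ]

theorem Finset.sum_range_succ_div_two_sub {M : Type*} [AddCommMonoid M] (f : ℕ → M) (n : ℕ) :
    ∑ k ∈ range ((n + 2) / 2 + 1), f (n + 2 - 2 * k) =
      f (n + 2) + ∑ k ∈ range (n / 2 + 1), f (n - 2 * k) := by
  rw [show (n + 2) / 2 + 1 = n / 2 + 1 + 1 by omega, sum_range_succ', add_comm]
  congr 1
  refine sum_congr rfl fun k _ => ?_
  congr 1
  omega

def orbitCorrection : ZMod 3 → Fin 4 → ℤ :=
  ![![-1, -2, -2, 5], ![5, -4, -4, 3], ![3, -8, 6, -1]]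

theorem B_mulVec_eigenvector : B *ᵥ ![1, 2, 2, 2] = (2 : ℤ) • (![1, 2, 2, 2] : Fin 4 → ℤ) := by
  decide

theorem B_mulVec_orbitCorrection (j : ZMod 3) :
    B *ᵥ orbitCorrection j = orbitCorrection (j + 1) := by
  revert j
  decide

theorem seven_smul_B_pow_mulVec (k : ℕ) :
    (7 : ℤ) • (B ^ k *ᵥ ![0, 0, 0, 1]) = (2 : ℤ) ^ k • ![1, 2, 2, 2] + orbitCorrection k :=
  B.smul_pow_mulVec_eq_of_mulVec_eq (r := fun k => orbitCorrection k) B_mulVec_eigenvector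
    (fun k => by rw [B_mulVec_orbitCorrection, Nat.cast_succ]) (by decide) k

theorem seven_mul_b_add_three (n : ℕ) : 7 * b (n + 3) = 2 ^ (n + 1) + orbitCorrection n 2 := by
  have h := congrFun (seven_smul_B_pow_mulVec n) 2
  simp only [Pi.smul_apply, Pi.add_apply, smul_eq_mul] at h
  rw [b, if_pos (by omega), Nat.add_sub_cancel, h, pow_succ]
  rfl

def sumCorrection (m : ℕ) : ℤ :=
  if m % 6 = 0 then -22 else if m % 6 = 1 then -2 else if m % 6 = 2 then -4
    else if m % 6 = 3 then -8 else if m % 6 = 4 then -16 else 10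

theorem three_mul_orbitCorrection_add_sumCorrection (n : ℕ) :
    3 * orbitCorrection n 2 + sumCorrection (n + 1) = sumCorrection (n + 3) := by
  have hcast : (n : ZMod 3) = ((n % 6 : ℕ) : ZMod 3) := by
    rw [ZMod.natCast_eq_natCast_iff']
    omega
  rw [hcast, sumCorrection, sumCorrection, Nat.add_mod n 1, Nat.add_mod n 3]
  have := Nat.mod_lt n (show 6 > 0 by norm_num)
  interval_cases n % 6 <;> rfl

theorem count_a_sv1_37_1 (m : ℕ) (hm : 1 ≤ m) :
    21 * ∑ k ∈ Finset.range (m / 2 + 1), b (m - 2 * k) =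
      2 ^ m + (if m % 6 = 0 then -22 else if m % 6 = 1 then -2 else if m % 6 = 2 then -4
        else if m % 6 = 3 then -8 else if m % 6 = 4 then -16 else 10) := by
  change _ = 2 ^ m + sumCorrection m
  obtain ⟨n, rfl⟩ : ∃ n, m = n + 1 := ⟨m - 1, by omega⟩
  induction n using Nat.twoStepInduction with
  | zero => decide
  | one => decide
  | more n ih _ =>
    rw [Finset.sum_range_succ_div_two_sub, mul_add, ih (by omega),
      ← three_mul_orbitCorrection_add_sumCorrection]
    linear_combination 3 * seven_mul_b_add_three n
end

section
/- Define g : ℕ → ℤ by g m = 0 for m ≤ 2, g 3 = 1, and g m = 2^(m−4) for m ≥ 4; define f : ℕ → ℤ by f m = ∑_{k=0}^{⌊m/3⌋} g (m − 3k); and define c : ℕ → ℤ by c m = ∑_{p=0}^{⌊m/2⌋} f (m − 2p). Then for every m ≥ 1: 2·( ((A^(m−1)).mulVec ![0,0,1]) 1 + ((A^(m−1)).mulVec ![0,0,1]) 2 ) + ((B^(m−1)).mulVec ![0,0,0,1]) 3 + c m + (2 if 3 divides m, else 0) = natDegree((X+1)·(F m).num − X·(F m).denom). -/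
/-!
Write `F m = p / q` in lowest terms. In `F (m + 1) = (p - X q) (p - q) / p²` the polynomials
`p - q` and `p` are coprime, so the only possible cancellation is one factor `X`, and it occurs
exactly when `X ∣ p`. The expansion of `F m` at `X = 0` follows the critical cycle
`0 ↦ ∞ ↦ 1 ↦ 0` of `h_0`, so this happens exactly when `3 ∣ m`, and then `X ∣ p` only once.
At `X = ∞` the difference `deg p - deg q` alternates between `0` and `1` and the leading
coefficients of `p` and `q` never agree (in the even case this would need a rational root of
`r² + r - 1`). Hence `d (m + 1) = 2 d m + 1 - m % 2 - [3 ∣ m]` for `d m = deg p`, and the degree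
on the right-hand side is `d m + 1`. On the left, each path count doubles at every step up to a
correction that is periodic in `m`, and the corrections add up to `-(m % 2) - [3 ∣ m]`.
-/

noncomputable def F : ℕ → RatFunc ℚ
  | 0 => (2 * RatFunc.X) / (RatFunc.X + 1)
  | (m + 1) => ((F m - RatFunc.X) * (F m - 1)) / (F m) ^ 2

def A : Matrix (Fin 3) (Fin 3) ℤ := !![0, 1, 0; 0, 0, 1; 2, 1, 1]

def g (m : ℕ) : ℤ :=
  if m ≤ 2 then 0 else if m = 3 then 1 else 2 ^ (m - 4)

def f (m : ℕ) : ℤ :=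
  ∑ k ∈ Finset.range (m / 3 + 1), g (m - 3 * k)

def c (m : ℕ) : ℤ :=
  ∑ p ∈ Finset.range (m / 2 + 1), f (m - 2 * p)

open Polynomial

theorem Polynomial.leadingCoeff_X_mul {R : Type*} [Semiring R] (p : R[X]) :
    (X * p).leadingCoeff = p.leadingCoeff := by
  rw [X_mul, leadingCoeff_mul_X]

section Degree

variable {R : Type*} [Ring R] {p q : R[X]}

theorem Polynomial.natDegree_sub_eq_of_leadingCoeff_ne (h : p.natDegree = q.natDegree)
    (hlc : p.leadingCoeff ≠ q.leadingCoeff) : (p - q).natDegree = p.natDegree :=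
  natDegree_eq_of_le_of_coeff_ne_zero ((natDegree_sub_le p q).trans (by omega))
    (by rwa [coeff_sub, sub_ne_zero, coeff_natDegree, h, coeff_natDegree])

theorem Polynomial.leadingCoeff_sub_eq_of_leadingCoeff_ne (h : p.natDegree = q.natDegree)
    (hlc : p.leadingCoeff ≠ q.leadingCoeff) :
    (p - q).leadingCoeff = p.leadingCoeff - q.leadingCoeff := by
  rw [leadingCoeff, natDegree_sub_eq_of_leadingCoeff_ne h hlc, coeff_sub, coeff_natDegree, h,
    coeff_natDegree]

end Degree

section AtInfinity

variable {K : Type*} [Field K] {p q : K[X]}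

theorem natDegree_X_add_one_mul_sub {e : ℕ} (he : e < 2)
    (hdeg : p.natDegree = q.natDegree + e) (hlc : p.leadingCoeff ≠ q.leadingCoeff) :
    ((X + 1) * p - X * q).natDegree = p.natDegree + 1 := by
  have hsub : (p - q).natDegree = p.natDegree := by
    interval_cases e
    · exact natDegree_sub_eq_of_leadingCoeff_ne hdeg hlc
    · exact natDegree_sub_eq_left_of_natDegree_lt (by omega)
  have hne : p - q ≠ 0 := sub_ne_zero.mpr (fun h => hlc (h ▸ rfl))
  rw [show (X + 1) * p - X * q = X * (p - q) + p by ring,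
    natDegree_add_eq_left_of_natDegree_lt (by rw [natDegree_X_mul hne]; omega),
    natDegree_X_mul hne, hsub]

theorem natDegree_sub_X_mul_mul_sub_of_natDegree_eq_add_one (hq : q ≠ 0)
    (hdeg : p.natDegree = q.natDegree + 1) (hlc : p.leadingCoeff ≠ q.leadingCoeff) :
    ((p - X * q) * (p - q)).natDegree = 2 * p.natDegree ∧
      ((p - X * q) * (p - q)).leadingCoeff ≠ p.leadingCoeff ^ 2 := by
  have hXq : p.natDegree = (X * q).natDegree := by rw [natDegree_X_mul hq, hdeg]
  have hlcXq : p.leadingCoeff ≠ (X * q).leadingCoeff := by rwa [leadingCoeff_X_mul]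
  have hq' : q.natDegree < p.natDegree := by omega
  have hp : p ≠ 0 := ne_zero_of_natDegree_gt hq'
  have hsub : p - q ≠ 0 := sub_ne_zero.mpr (fun h => hq'.ne (h ▸ rfl))
  have hXsub : p - X * q ≠ 0 := sub_ne_zero.mpr (fun h => hlcXq (h ▸ rfl))
  rw [natDegree_mul hXsub hsub, natDegree_sub_eq_of_leadingCoeff_ne hXq hlcXq,
    natDegree_sub_eq_left_of_natDegree_lt hq', leadingCoeff_mul,
    leadingCoeff_sub_eq_of_leadingCoeff_ne hXq hlcXq, leadingCoeff_X_mul,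
    leadingCoeff_sub_of_degree_lt (degree_lt_degree hq')]
  exact ⟨by omega, fun h => mul_ne_zero (leadingCoeff_ne_zero.mpr hq)
    (leadingCoeff_ne_zero.mpr hp) (by linear_combination -h)⟩

end AtInfinity

theorem Rat.sq_add_mul_sub_sq_ne_zero {a b : ℚ} (hb : b ≠ 0) : a ^ 2 + a * b - b ^ 2 ≠ 0 := by
  intro h
  have h5 : IsSquare ((5 : ℕ) : ℚ) := ⟨(2 * a + b) / b, by
    field_simp
    linear_combination (-4) * h⟩
  exact Irreducible.not_isSquare Nat.prime_five (Rat.isSquare_natCast_iff.mp h5)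

theorem natDegree_sub_X_mul_mul_sub_of_natDegree_eq {p q : ℚ[X]} (hq : q ≠ 0)
    (hdeg : p.natDegree = q.natDegree) (hlc : p.leadingCoeff ≠ q.leadingCoeff) :
    ((p - X * q) * (p - q)).natDegree = 2 * p.natDegree + 1 ∧
      ((p - X * q) * (p - q)).leadingCoeff ≠ p.leadingCoeff ^ 2 := by
  have hXq : p.natDegree < (X * q).natDegree := by rw [natDegree_X_mul hq]; omega
  have hsub : p - q ≠ 0 := sub_ne_zero.mpr (fun h => hlc (h ▸ rfl))
  have hXsub : p - X * q ≠ 0 := sub_ne_zero.mpr (fun h => hXq.ne (h ▸ rfl))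
  rw [natDegree_mul hXsub hsub, natDegree_sub_eq_right_of_natDegree_lt hXq,
    natDegree_sub_eq_of_leadingCoeff_ne hdeg hlc, natDegree_X_mul hq, leadingCoeff_mul,
    leadingCoeff_sub_of_degree_lt' (degree_lt_degree hXq), leadingCoeff_X_mul,
    leadingCoeff_sub_eq_of_leadingCoeff_ne hdeg hlc]
  exact ⟨by omega, fun h => Rat.sq_add_mul_sub_sq_ne_zero (a := p.leadingCoeff)
    (leadingCoeff_ne_zero.mpr hq) (by linear_combination -h)⟩

theorem Polynomial.isCoprime_X_left_iff {K : Type*} [Field K] {p : K[X]} :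
    IsCoprime X p ↔ p.coeff 0 ≠ 0 := by
  rw [irreducible_X.coprime_iff_not_dvd, X_dvd_iff]

section Coprime

variable {K : Type*} [Field K] {p q t : K[X]}

theorem isCoprime_sub_X_mul_mul_sub_sq (h : IsCoprime p q) (hp : p.coeff 0 ≠ 0) :
    IsCoprime ((p - X * q) * (p - q)) (p ^ 2) := by
  have h₁ : IsCoprime (p - X * q) p := by
    simpa using (IsCoprime.mul_sub_right_left_iff (z := 1)).mpr
      ((isCoprime_X_left_iff.mpr hp).mul_left h.symm)
  have h₂ : IsCoprime (p - q) p := by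
    simpa using (IsCoprime.mul_sub_right_left_iff (z := 1)).mpr h.symm
  exact (h₁.mul_left h₂).pow_right

theorem isCoprime_sub_mul_X_mul_sub (h : IsCoprime (X * t) q) (hq : q.coeff 0 ≠ 0)
    (htq : t.coeff 0 ≠ q.coeff 0) : IsCoprime ((t - q) * (X * t - q)) (X * t ^ 2) := by
  have hqt : IsCoprime q t := h.of_mul_left_right.symm
  have h₁ : IsCoprime (t - q) X :=
    (isCoprime_X_left_iff.mpr (by rwa [coeff_sub, sub_ne_zero])).symm
  have h₂ : IsCoprime (X * t - q) X :=
    (isCoprime_X_left_iff.mpr (by simpa using hq)).symm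
  have h₃ : IsCoprime (t - q) t := by
    simpa using (IsCoprime.mul_sub_right_left_iff (z := 1)).mpr hqt
  have h₄ : IsCoprime (X * t - q) t := IsCoprime.mul_sub_right_left_iff.mpr hqt
  exact (h₁.mul_left h₂).mul_right (h₃.mul_left h₄).pow_right

end Coprime

/-- Near `X = 0` the critical orbit `0 ↦ ∞ ↦ 1 ↦ 0` of `h_0` forces `p / q` to behave like `λ X`,
`μ / X` or `1 + ν X` according to `r = 0, 1, 2`, with `λ, ν ∉ {0, 1}` and `μ ∉ {0, -1}`. -/
def Germ (r : ℕ) (p q : ℚ[X]) : Prop :=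
  match r with
  | 0 => p.coeff 0 = 0 ∧ p.coeff 1 ≠ 0 ∧ q.coeff 0 ≠ 0 ∧ p.coeff 1 ≠ q.coeff 0
  | 1 => q.coeff 0 = 0 ∧ p.coeff 0 ≠ 0 ∧ q.coeff 1 ≠ 0 ∧ p.coeff 0 + q.coeff 1 ≠ 0
  | _ => p.coeff 0 = q.coeff 0 ∧ p.coeff 0 ≠ 0 ∧ p.coeff 1 ≠ q.coeff 1 ∧
      p.coeff 1 - q.coeff 1 ≠ p.coeff 0

namespace Germ

variable {p q t : ℚ[X]}

theorem ne_zero {r : ℕ} (h : Germ r p q) : p ≠ 0 ∧ q ≠ 0 := by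
  constructor <;> rintro rfl <;> rcases r with _ | _ | r <;>
    simp only [Germ, coeff_zero] at h <;> tauto

theorem two_of_one (h : Germ 1 p q) : Germ 2 ((p - X * q) * (p - q)) (p ^ 2) := by
  obtain ⟨hq₀, hp₀, hq₁, hpq⟩ := h
  simp only [Germ, mul_coeff_zero, mul_coeff_one, pow_two, coeff_sub, coeff_X_zero, coeff_X_one,
    hq₀, zero_mul, mul_zero, sub_zero, add_zero]
  exact ⟨trivial, mul_ne_zero hp₀ hp₀, fun h => mul_ne_zero hp₀ hq₁ (by linear_combination -h),
    fun h => mul_ne_zero hp₀ hpq (by linear_combination -h)⟩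

theorem zero_of_two (h : Germ 2 p q) : Germ 0 ((p - X * q) * (p - q)) (p ^ 2) := by
  obtain ⟨hpq₀, hp₀, hpq₁, hpq⟩ := h
  simp only [Germ, mul_coeff_zero, mul_coeff_one, pow_two, coeff_sub, coeff_X_zero, coeff_X_one,
    ← hpq₀, zero_mul, sub_zero, sub_self, mul_zero, add_zero]
  exact ⟨trivial, mul_ne_zero hp₀ (sub_ne_zero.mpr hpq₁), mul_ne_zero hp₀ hp₀,
    fun h => mul_ne_zero hp₀ (sub_ne_zero.mpr hpq) (by linear_combination h)⟩

theorem one_of_zero (h : Germ 0 (X * t) q) : Germ 1 ((t - q) * (X * t - q)) (X * t ^ 2) := by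
  obtain ⟨-, ht₀, hq₀, htq⟩ := h
  simp only [Germ, mul_coeff_zero, mul_coeff_one, pow_two, coeff_sub, coeff_X_zero, coeff_X_one,
    zero_mul, zero_sub, one_mul, zero_add] at *
  refine ⟨trivial, mul_ne_zero (sub_ne_zero.mpr htq) (neg_ne_zero.mpr hq₀),
    mul_ne_zero ht₀ ht₀, ?_⟩
  nlinarith [sq_nonneg (2 * t.coeff 0 - q.coeff 0), sq_pos_of_ne_zero hq₀]

end Germ

section NumDenom

variable {K : Type*} [Field K] {p q : K[X]}

theorem Polynomial.gcd_eq_one_of_isCoprime [DecidableEq K] (h : IsCoprime p q) : gcd p q = 1 := by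
  rw [← normalize_gcd, normalize_eq_one]
  exact (gcd_isUnit_iff p q).mpr h

theorem RatFunc.num_div_of_isCoprime (h : IsCoprime p q) :
    (algebraMap K[X] (RatFunc K) p / algebraMap K[X] (RatFunc K) q).num =
      Polynomial.C q.leadingCoeff⁻¹ * p := by
  classical
  rw [num_div, gcd_eq_one_of_isCoprime h, EuclideanDomain.div_one, EuclideanDomain.div_one]

theorem RatFunc.denom_div_of_isCoprime (h : IsCoprime p q) (hq : q ≠ 0) :
    (algebraMap K[X] (RatFunc K) p / algebraMap K[X] (RatFunc K) q).denom =
      Polynomial.C q.leadingCoeff⁻¹ * q := by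
  classical
  rw [denom_div _ hq, gcd_eq_one_of_isCoprime h, EuclideanDomain.div_one]

end NumDenom

theorem RatFunc.natDegree_mul_num_sub_mul_denom {K : Type*} [Field K] {p q : K[X]}
    {x : RatFunc K} (hx : x = algebraMap K[X] (RatFunc K) p / algebraMap K[X] (RatFunc K) q)
    (h : IsCoprime p q) (hq : q ≠ 0) (a b : K[X]) :
    (a * x.num - b * x.denom).natDegree = (a * p - b * q).natDegree := by
  rw [hx, num_div_of_isCoprime h, denom_div_of_isCoprime h hq,
    show a * (Polynomial.C q.leadingCoeff⁻¹ * p) - b * (Polynomial.C q.leadingCoeff⁻¹ * q) =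
      Polynomial.C q.leadingCoeff⁻¹ * (a * p - b * q) by ring,
    natDegree_C_mul (inv_ne_zero (leadingCoeff_ne_zero.mpr hq))]

theorem F_succ_eq_div {m : ℕ} {p q a b : ℚ[X]}
    (hF : F m = algebraMap ℚ[X] (RatFunc ℚ) p / algebraMap ℚ[X] (RatFunc ℚ) q)
    (hp : p ≠ 0) (hq : q ≠ 0) (hb : b ≠ 0) (h : a * p ^ 2 = (p - X * q) * (p - q) * b) :
    F (m + 1) = algebraMap ℚ[X] (RatFunc ℚ) a / algebraMap ℚ[X] (RatFunc ℚ) b := by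
  have hp' := RatFunc.algebraMap_ne_zero hp
  have hq' := RatFunc.algebraMap_ne_zero hq
  have hb' := RatFunc.algebraMap_ne_zero hb
  have h' := congrArg (algebraMap ℚ[X] (RatFunc ℚ)) h
  simp only [map_mul, map_sub, map_pow, RatFunc.algebraMap_X] at h'
  rw [F, hF, div_eq_div_iff (pow_ne_zero 2 (div_ne_zero hp' hq')) hb']
  field_simp
  linear_combination -h'

structure ReducedForm (m : ℕ) (p q : ℚ[X]) : Prop where
  eq_div : F m = algebraMap ℚ[X] (RatFunc ℚ) p / algebraMap ℚ[X] (RatFunc ℚ) q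
  isCoprime : IsCoprime p q
  natDegree_eq : p.natDegree = q.natDegree + m % 2
  leadingCoeff_ne : p.leadingCoeff ≠ q.leadingCoeff
  germ : Germ (m % 3) p q

namespace ReducedForm

variable {m : ℕ} {p q t : ℚ[X]}

theorem zero : ReducedForm 0 (C 2 * X) (X + C 1) where
  eq_div := by simp [F]
  isCoprime := by
    refine ⟨-C (1 / 2), 1, ?_⟩
    have : (C (1 / 2) : ℚ[X]) * C 2 = 1 := by rw [← C_mul]; norm_num
    rw [C_1]
    linear_combination (-X) * this
  natDegree_eq := by rw [natDegree_C_mul_X _ two_ne_zero, natDegree_X_add_C]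
  leadingCoeff_ne := by rw [leadingCoeff_C_mul_X, leadingCoeff_X_add_C]; norm_num
  germ := by simp [Germ]

theorem natDegree_sub_X_mul_mul_sub (h : ReducedForm m p q) :
    ((p - X * q) * (p - q)).natDegree = 2 * p.natDegree + 1 - m % 2 ∧
      ((p - X * q) * (p - q)).leadingCoeff ≠ p.leadingCoeff ^ 2 := by
  have hq := h.germ.ne_zero.2
  have hdeg := h.natDegree_eq
  rcases Nat.mod_two_eq_zero_or_one m with he | he <;> rw [he] at hdeg ⊢
  · exact natDegree_sub_X_mul_mul_sub_of_natDegree_eq hq hdeg h.leadingCoeff_ne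
  · exact natDegree_sub_X_mul_mul_sub_of_natDegree_eq_add_one hq hdeg h.leadingCoeff_ne

theorem succ_of_mod_three_ne_zero (h : ReducedForm m p q) (hm : m % 3 ≠ 0) :
    ReducedForm (m + 1) ((p - X * q) * (p - q)) (p ^ 2) := by
  obtain ⟨hp, hq⟩ := h.germ.ne_zero
  obtain ⟨hdeg, hlc⟩ := h.natDegree_sub_X_mul_mul_sub
  obtain ⟨hp₀, hgerm⟩ : p.coeff 0 ≠ 0 ∧ Germ ((m + 1) % 3) ((p - X * q) * (p - q)) (p ^ 2) := by
    have := h.germ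
    rcases (by omega : m % 3 = 1 ∨ m % 3 = 2) with h3 | h3 <;> rw [h3] at this
    · rw [show (m + 1) % 3 = 2 by omega]; exact ⟨this.2.1, this.two_of_one⟩
    · rw [show (m + 1) % 3 = 0 by omega]; exact ⟨this.2.1, this.zero_of_two⟩
  refine ⟨F_succ_eq_div h.eq_div hp hq (pow_ne_zero 2 hp) (by ring),
    isCoprime_sub_X_mul_mul_sub_sq h.isCoprime hp₀, ?_, by rwa [leadingCoeff_pow], hgerm⟩
  rw [hdeg, natDegree_pow]
  omega

theorem succ_of_X_mul (h : ReducedForm m (X * t) q) (hm : m % 3 = 0) :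
    ReducedForm (m + 1) ((t - q) * (X * t - q)) (X * t ^ 2) := by
  have hgerm : Germ 0 (X * t) q := hm ▸ h.germ
  obtain ⟨hp, hq⟩ := h.germ.ne_zero
  obtain ⟨ha, hb⟩ := hgerm.one_of_zero.ne_zero
  have ht : t ≠ 0 := right_ne_zero_of_mul hp
  obtain ⟨hdeg, hlc⟩ := h.natDegree_sub_X_mul_mul_sub
  have hfactor : (X * t - X * q) * (X * t - q) = X * ((t - q) * (X * t - q)) := by ring
  rw [hfactor, natDegree_X_mul ha, natDegree_X_mul ht] at hdeg
  rw [hfactor, leadingCoeff_X_mul, leadingCoeff_X_mul] at hlc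
  refine ⟨F_succ_eq_div h.eq_div hp hq hb (by ring),
    isCoprime_sub_mul_X_mul_sub h.isCoprime hgerm.2.2.1 (by simpa using hgerm.2.2.2), ?_,
    by rwa [leadingCoeff_X_mul, leadingCoeff_pow],
    by rw [show (m + 1) % 3 = 1 by omega]; exact hgerm.one_of_zero⟩
  rw [natDegree_X_mul (pow_ne_zero 2 ht), natDegree_pow]
  omega

theorem exists_succ (h : ReducedForm m p q) : ∃ p' q', ReducedForm (m + 1) p' q' ∧
    p'.natDegree + m % 2 + (if 3 ∣ m then 1 else 0) = 2 * p.natDegree + 1 := by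
  by_cases hm : m % 3 = 0
  · obtain ⟨t, rfl⟩ : X ∣ p := X_dvd_iff.mpr (hm ▸ h.germ).1
    have ht : t ≠ 0 := right_ne_zero_of_mul h.germ.ne_zero.1
    refine ⟨_, _, h.succ_of_X_mul hm, ?_⟩
    have hdeg := (h.succ_of_X_mul hm).natDegree_eq
    rw [natDegree_X_mul (pow_ne_zero 2 ht), natDegree_pow] at hdeg
    rw [natDegree_X_mul ht, if_pos (Nat.dvd_of_mod_eq_zero hm)]
    omega
  · refine ⟨_, _, h.succ_of_mod_three_ne_zero hm, ?_⟩
    have hdeg := (h.succ_of_mod_three_ne_zero hm).natDegree_eq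
    rw [natDegree_pow] at hdeg
    rw [if_neg (fun h3 => hm (Nat.mod_eq_zero_of_dvd h3))]
    omega

theorem natDegree_X_add_one_mul_num_sub_X_mul_denom (h : ReducedForm m p q) :
    ((X + 1) * (F m).num - X * (F m).denom).natDegree = p.natDegree + 1 := by
  rw [RatFunc.natDegree_mul_num_sub_mul_denom h.eq_div h.isCoprime h.germ.ne_zero.2,
    natDegree_X_add_one_mul_sub (Nat.mod_lt m two_pos) h.natDegree_eq h.leadingCoeff_ne]

end ReducedForm

open Matrix

section MatrixPow

variable {n R : Type*} [Fintype n] [DecidableEq n] [CommSemiring R] {M : Matrix n n R}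
  {v w : n → R}

theorem Matrix.pow_succ_mulVec_of_mulVec_eq {a : R} (h : M *ᵥ v = a • v + w) (k : ℕ) :
    M ^ (k + 1) *ᵥ v = a • (M ^ k *ᵥ v) + M ^ k *ᵥ w := by
  rw [pow_succ, ← mulVec_mulVec, h, mulVec_add, mulVec_smul]

theorem Matrix.pow_mulVec_mod_of_pow_mulVec_eq {p : ℕ} (h : M ^ p *ᵥ v = v) (k : ℕ) :
    M ^ k *ᵥ v = M ^ (k % p) *ᵥ v := by
  have hpow : ∀ j : ℕ, (M ^ p) ^ j *ᵥ v = v := by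
    intro j
    induction j with
    | zero => rw [pow_zero, one_mulVec]
    | succ j ih => rw [pow_succ, ← mulVec_mulVec, h, ih]
  conv_lhs => rw [← Nat.mod_add_div k p, pow_add, pow_mul, ← mulVec_mulVec, hpow]

end MatrixPow

def aCount (k : ℕ) : ℤ := (A ^ k *ᵥ ![0, 0, 1]) 1 + (A ^ k *ᵥ ![0, 0, 1]) 2

def bCount (k : ℕ) : ℤ := (B ^ k *ᵥ ![0, 0, 0, 1]) 3

theorem aCount_succ (k : ℕ) :
    aCount (k + 1) = 2 * aCount k + if k % 3 = 0 then 0 else if k % 3 = 1 then -1 else 1 := by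
  have hv : A *ᵥ ![0, 0, 1] = (2 : ℤ) • ![0, 0, 1] + ![0, 1, -1] := by decide
  have hw : A ^ 3 *ᵥ ![0, 1, -1] = ![0, 1, -1] := by decide
  have hcorr : ∀ j < 3, (A ^ j *ᵥ ![0, 1, -1]) 1 + (A ^ j *ᵥ ![0, 1, -1]) 2 =
      if j = 0 then 0 else if j = 1 then -1 else 1 := by decide
  rw [aCount, aCount, pow_succ_mulVec_of_mulVec_eq hv, pow_mulVec_mod_of_pow_mulVec_eq hw,
    ← hcorr _ (k.mod_lt three_pos)]
  simp only [Pi.add_apply, Pi.smul_apply, smul_eq_mul]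
  ring

theorem bCount_succ (k : ℕ) : bCount (k + 1) = 2 * bCount k + if k % 3 = 2 then 1 else -1 := by
  have hv : B *ᵥ ![0, 0, 0, 1] = (2 : ℤ) • ![0, 0, 0, 1] + ![1, 0, 0, -1] := by decide
  have hw : B ^ 3 *ᵥ ![1, 0, 0, -1] = ![1, 0, 0, -1] := by decide
  have hcorr : ∀ j < 3, (B ^ j *ᵥ ![1, 0, 0, -1]) 3 = if j = 2 then 1 else -1 := by decide
  rw [bCount, bCount, pow_succ_mulVec_of_mulVec_eq hv, pow_mulVec_mod_of_pow_mulVec_eq hw,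
    ← hcorr _ (k.mod_lt three_pos)]
  simp only [Pi.add_apply, Pi.smul_apply, smul_eq_mul]

theorem g_add_four (m : ℕ) : g (m + 4) = 2 ^ m := by
  simp [g]

theorem f_add_three (m : ℕ) : f (m + 3) = g (m + 3) + f m := by
  rw [f, f, show (m + 3) / 3 + 1 = m / 3 + 1 + 1 by omega, Finset.sum_range_succ']
  simp only [show ∀ k, m + 3 - 3 * (k + 1) = m - 3 * k by omega, mul_zero, Nat.sub_zero]
  ring

theorem c_add_two (m : ℕ) : c (m + 2) = f (m + 2) + c m := by
  rw [c, c, show (m + 2) / 2 + 1 = m / 2 + 1 + 1 by omega, Finset.sum_range_succ']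
  simp only [show ∀ k, m + 2 - 2 * (k + 1) = m - 2 * k by omega, mul_zero, Nat.sub_zero]
  ring

theorem f_succ {m : ℕ} (hm : 1 ≤ m) :
    f (m + 1) = 2 * f m + if m % 3 = 2 then 1 else if m % 3 = 0 then -1 else 0 := by
  induction m using Nat.strong_induction_on with
  | _ m ih =>
    match m, hm with
    | 1, _ | 2, _ | 3, _ => decide
    | m + 4, _ =>
      have h₁ : f (m + 5) = g (m + 5) + f (m + 2) := f_add_three (m + 2)
      have h₂ : f (m + 4) = g (m + 4) + f (m + 1) := f_add_three (m + 1)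
      have h₃ : g (m + 5) = 2 * g (m + 4) := by rw [g_add_four, g_add_four, pow_succ, mul_comm]
      have h₄ : f (m + 2) = 2 * f (m + 1) + _ := ih (m + 1) (by omega) (by omega)
      show f (m + 5) = _
      rw [h₁, h₂, h₃, h₄]
      split_ifs <;> omega

theorem c_succ {m : ℕ} (hm : 1 ≤ m) :
    c (m + 1) = 2 * c m + if m % 6 = 3 then -1 else if m % 6 = 2 ∨ m % 6 = 4 then 1 else 0 := by
  induction m using Nat.strong_induction_on with
  | _ m ih =>
    match m, hm with
    | 1, _ | 2, _ => decide
    | m + 3, _ =>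
      have h₁ : c (m + 4) = f (m + 4) + c (m + 2) := c_add_two (m + 2)
      have h₂ : c (m + 3) = f (m + 3) + c (m + 1) := c_add_two (m + 1)
      have h₃ : f (m + 4) = 2 * f (m + 3) + _ := f_succ (by omega : 1 ≤ m + 3)
      have h₄ : c (m + 2) = 2 * c (m + 1) + _ := ih (m + 1) (by omega) (by omega)
      show c (m + 4) = _
      rw [h₁, h₂, h₃, h₄]
      split_ifs <;> omega

def predictedDegree (m : ℕ) : ℤ :=
  2 * aCount (m - 1) + bCount (m - 1) + c m + if 3 ∣ m then 2 else 0

theorem predictedDegree_one : predictedDegree 1 = 3 := by decide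

theorem predictedDegree_succ {m : ℕ} (hm : 1 ≤ m) :
    predictedDegree (m + 1) = 2 * predictedDegree m - (m % 2 : ℕ) - if 3 ∣ m then 1 else 0 := by
  obtain ⟨k, rfl⟩ := Nat.exists_eq_add_of_le' hm
  simp only [predictedDegree, Nat.add_sub_cancel, aCount_succ, bCount_succ, c_succ hm]
  split_ifs <;> omega

theorem exists_reducedForm_natDegree {m : ℕ} (hm : 1 ≤ m) :
    ∃ p q, ReducedForm m p q ∧ (p.natDegree : ℤ) + 1 = predictedDegree m := by
  induction m, hm using Nat.le_induction with
  | base =>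
    obtain ⟨p, q, h, hdeg⟩ := ReducedForm.zero.exists_succ
    rw [natDegree_C_mul_X _ two_ne_zero] at hdeg
    exact ⟨p, q, h, by rw [predictedDegree_one]; simp at hdeg; omega⟩
  | succ m hm ih =>
    obtain ⟨p, q, h, hp⟩ := ih
    obtain ⟨p', q', h', hdeg⟩ := h.exists_succ
    refine ⟨p', q', h', ?_⟩
    rw [predictedDegree_succ hm, ← hp]
    split_ifs at hdeg ⊢ <;> omega

theorem capture_count_check (m : ℕ) (hm : 1 ≤ m) :
    2 * (((A ^ (m - 1)).mulVec ![0, 0, 1]) 1 + ((A ^ (m - 1)).mulVec ![0, 0, 1]) 2) +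
        ((B ^ (m - 1)).mulVec ![0, 0, 0, 1]) 3 + c m + (if 3 ∣ m then 2 else 0) =
      ((((Polynomial.X + 1) * (F m).num - Polynomial.X * (F m).denom).natDegree : ℤ)) := by
  obtain ⟨p, q, h, hdeg⟩ := exists_reducedForm_natDegree hm
  show predictedDegree m = _
  rw [h.natDegree_X_add_one_mul_num_sub_X_mul_denom, ← hdeg]
  push_cast
  rfl
end
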